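/- Let s : ℝ → ℝ ∪ {∞} be proper, convex and lower semicontinuous, let γ, κ > 0 with γκ² < 1, and let t ∈ [0,1). If |prox_s(x) − prox_s(y)| ≤ (γκ²t/(1 − t(1 − γκ²)))·|x − y| for all x, y ∈ ℝ, then |prox_{γ·s(κ·)}(x) − prox_{γ·s(κ·)}(y)| ≤ t·|x − y| for all x, y ∈ ℝ, where γ·s(κ·) denotes the function u ↦ γ·s(κu). -/

import Mathlib

/-!
Write `L = γκ²`. Substituting `z = κy` shows that `κ·q x` is the proximal point of `L·s` at `κx`,
and by the variational inequality of proximal points this means `κ·q x = p (u x)` with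
`u x = κ·q x + (κx - κ·q x)/L`. For `a = p (u x) - p (u y)` and `b = u x - u y` we have
`κ(x - y) = L·b + (1 - L)·a`, and firm nonexpansiveness `a² ≤ a·b` of `p` makes `a` and `b` of the
same sign, so `κ|x - y| = L|b| + (1 - L)|a|`. The assumed Lipschitz bound on `p` rearranges to
exactly `|a| ≤ t·κ|x - y|`.
-/

noncomputable section

/-- `p` is the (unique) proximal point at `x` of the extended-real-valued functional `s`. -/
def IsProxPtEReal (s : ℝ → EReal) (x p : ℝ) : Prop :=
  (∀ y : ℝ, (((x - p) ^ 2 / 2 : ℝ) : EReal) + s p ≤ (((x - y) ^ 2 / 2 : ℝ) : EReal) + s y) ∧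
  ∀ q : ℝ, (∀ y : ℝ, (((x - q) ^ 2 / 2 : ℝ) : EReal) + s q ≤
    (((x - y) ^ 2 / 2 : ℝ) : EReal) + s y) → q = p

/-- `s : ℝ → ℝ ∪ {∞}` is proper (finite somewhere, never `-∞`). -/
def ERealProper (s : ℝ → EReal) : Prop := (∃ x, s x ≠ ⊤) ∧ ∀ x, s x ≠ ⊥

/-- Convexity for extended-real-valued functions on `ℝ`. -/
def ERealConvexOn (s : ℝ → EReal) : Prop :=
  ∀ x y : ℝ, ∀ a b : ℝ, 0 ≤ a → 0 ≤ b → a + b = 1 →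
    s (a * x + b * y) ≤ (a : EReal) * s x + (b : EReal) * s y

open Filter Topology

lemma sub_mul_sub_le_of_forall_segment {x p w D : ℝ}
    (h : ∀ a : ℝ, 0 < a → a < 1 → (x - p) ^ 2 / 2 ≤ (x - (p + a * (w - p))) ^ 2 / 2 + a * D) :
    (w - p) * (x - p) ≤ D := by
  have hlim : Tendsto (fun a : ℝ => D + a * ((w - p) ^ 2 / 2)) (𝓝[>] 0) (𝓝 D) := by
    have : Continuous (fun a : ℝ => D + a * ((w - p) ^ 2 / 2)) := by fun_prop
    simpa using (this.tendsto 0).mono_left nhdsWithin_le_nhds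
  refine ge_of_tendsto hlim ?_
  filter_upwards [Ioo_mem_nhdsGT zero_lt_one] with a ⟨ha0, ha1⟩
  have key : a * ((w - p) * (x - p)) ≤ a * (D + a * ((w - p) ^ 2 / 2)) := by
    nlinarith [h a ha0 ha1]
  exact le_of_mul_le_mul_left key ha0

lemma ERealConvexOn.const_mul_comp_mul {s : ℝ → EReal} (hs : ERealConvexOn s) {γ : ℝ}
    (hγ : 0 ≤ γ) (κ : ℝ) : ERealConvexOn (fun u => (γ : EReal) * s (κ * u)) := by
  intro x y a b ha hb hab
  calc (γ : EReal) * s (κ * (a * x + b * y))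
      = γ * s (a * (κ * x) + b * (κ * y)) := by ring_nf
    _ ≤ γ * (a * s (κ * x) + b * s (κ * y)) :=
        mul_le_mul_of_nonneg_left (hs _ _ a b ha hb hab) (EReal.coe_nonneg.mpr hγ)
    _ = a * (γ * s (κ * x)) + b * (γ * s (κ * y)) := by
        rw [EReal.left_distrib_of_nonneg_of_ne_top (EReal.coe_nonneg.mpr hγ) (EReal.coe_ne_top γ),
          mul_left_comm, mul_left_comm (γ : EReal)]

lemma EReal.coe_mul_ne_top_of_nonneg {γ : ℝ} (hγ : 0 ≤ γ) {e : EReal} (he : e ≠ ⊤) :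
    (γ : EReal) * e ≠ ⊤ :=
  (EReal.mul_ne_top _ _).2
    ⟨.inl (EReal.coe_ne_bot γ), .inl (EReal.coe_nonneg.mpr hγ), .inl (EReal.coe_ne_top γ), .inr he⟩

lemma ERealProper.const_mul_comp_mul {s : ℝ → EReal} (hs : ERealProper s) {γ : ℝ} (hγ : 0 ≤ γ)
    {κ : ℝ} (hκ : κ ≠ 0) : ERealProper (fun u => (γ : EReal) * s (κ * u)) := by
  obtain ⟨⟨x₀, hx₀⟩, hbot⟩ := hs
  refine ⟨⟨x₀ / κ, ?_⟩, fun u => ?_⟩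
  · simpa only [mul_div_cancel₀ _ hκ] using EReal.coe_mul_ne_top_of_nonneg hγ hx₀
  · exact (EReal.mul_ne_bot _ _).2 ⟨.inl (EReal.coe_ne_bot γ), .inr (hbot _),
      .inl (EReal.coe_ne_top γ), .inl (EReal.coe_nonneg.mpr hγ)⟩

lemma IsProxPtEReal.ne_top {f : ℝ → EReal} {x p y : ℝ} (hp : IsProxPtEReal f x p)
    (hy : f y ≠ ⊤) : f p ≠ ⊤ := by
  intro htop
  have h := hp.1 y
  rw [htop, EReal.add_top_of_ne_bot (EReal.coe_ne_bot _), top_le_iff] at h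
  exact EReal.add_ne_top (EReal.coe_ne_top _) hy h

lemma IsProxPtEReal.sub_mul_sub_le {f : ℝ → EReal} {x p w : ℝ} (hf : ERealProper f)
    (hconv : ERealConvexOn f) (hp : IsProxPtEReal f x p) (hw : f w ≠ ⊤) :
    (w - p) * (x - p) ≤ (f w).toReal - (f p).toReal := by
  have hfp : f p ≠ ⊤ := hp.ne_top hw
  refine sub_mul_sub_le_of_forall_segment fun a ha0 ha1 => ?_
  have hseg : f (p + a * (w - p)) ≤
      (((1 - a) * (f p).toReal + a * (f w).toReal : ℝ) : EReal) := by
    have := hconv p w (1 - a) a (by linarith) ha0.le (by ring)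
    rw [show (1 - a) * p + a * w = p + a * (w - p) by ring, ← EReal.coe_toReal hfp (hf.2 p),
      ← EReal.coe_toReal hw (hf.2 w)] at this
    exact_mod_cast this
  have hmin := (hp.1 (p + a * (w - p))).trans (add_le_add_right hseg _)
  rw [← EReal.coe_toReal hfp (hf.2 p)] at hmin
  have hmin' : (x - p) ^ 2 / 2 + (f p).toReal ≤
      (x - (p + a * (w - p))) ^ 2 / 2 + ((1 - a) * (f p).toReal + a * (f w).toReal) := by
    exact_mod_cast hmin
  linarith

lemma IsProxPtEReal.eq_of_forall_sub_mul_sub_le {f : ℝ → EReal} {x p z : ℝ}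
    (hbot : ∀ y, f y ≠ ⊥) (hp : IsProxPtEReal f x p) (hz : f z ≠ ⊤)
    (h : ∀ w, f w ≠ ⊤ → (w - z) * (x - z) ≤ (f w).toReal - (f z).toReal) : z = p := by
  refine hp.2 z fun w => ?_
  rcases eq_or_ne (f w) ⊤ with hw | hw
  · rw [hw, EReal.add_top_of_ne_bot (EReal.coe_ne_bot _)]
    exact le_top
  rw [← EReal.coe_toReal hz (hbot z), ← EReal.coe_toReal hw (hbot w)]
  exact_mod_cast (by nlinarith [h w hw, sq_nonneg (w - z)] :
    (x - z) ^ 2 / 2 + (f z).toReal ≤ (x - w) ^ 2 / 2 + (f w).toReal)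

lemma IsProxPtEReal.sq_sub_le_mul_sub {f : ℝ → EReal} {x₁ x₂ p₁ p₂ : ℝ} (hf : ERealProper f)
    (hconv : ERealConvexOn f) (h₁ : IsProxPtEReal f x₁ p₁) (h₂ : IsProxPtEReal f x₂ p₂) :
    (p₁ - p₂) ^ 2 ≤ (p₁ - p₂) * (x₁ - x₂) := by
  obtain ⟨y, hy⟩ := hf.1
  nlinarith [h₁.sub_mul_sub_le hf hconv (h₂.ne_top hy), h₂.sub_mul_sub_le hf hconv (h₁.ne_top hy)]

lemma IsProxPtEReal.mul_eq_of_const_mul_comp_mul {s : ℝ → EReal} {γ κ x z p : ℝ}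
    (hs : ERealProper s) (hconv : ERealConvexOn s) (hγ : 0 < γ) (hκ : 0 < κ)
    (hz : IsProxPtEReal (fun u => (γ : EReal) * s (κ * u)) x z)
    (hp : IsProxPtEReal s (κ * z + (κ * x - κ * z) / (γ * κ ^ 2)) p) : κ * z = p := by
  have hf := hs.const_mul_comp_mul hγ.le hκ.ne'
  have hfconv := hconv.const_mul_comp_mul hγ.le κ
  obtain ⟨y, hy⟩ := hf.1
  have hsz : s (κ * z) ≠ ⊤ := fun h =>
    hz.ne_top hy (by simp only [h, EReal.coe_mul_top_of_pos hγ])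
  refine hp.eq_of_forall_sub_mul_sub_le hs.2 hsz fun w hw => ?_
  have h := hz.sub_mul_sub_le hf hfconv (w := w / κ)
    (EReal.coe_mul_ne_top_of_nonneg hγ.le (by rwa [mul_div_cancel₀ _ hκ.ne']))
  simp only [EReal.toReal_mul, EReal.toReal_coe, mul_div_cancel₀ _ hκ.ne'] at h
  rw [show (w - κ * z) * (κ * z + (κ * x - κ * z) / (γ * κ ^ 2) - κ * z)
    = (w / κ - z) * (x - z) / γ by field_simp; ring, div_le_iff₀ hγ]
  linarith

lemma abs_le_mul_abs_of_sq_le_mul {a b L t : ℝ} (hL0 : 0 ≤ L) (hL1 : L ≤ 1) (ht0 : 0 ≤ t)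
    (ht1 : t < 1) (hab : a ^ 2 ≤ a * b) (hlip : |a| ≤ L * t / (1 - t * (1 - L)) * |b|) :
    |a| ≤ t * |L * b + (1 - L) * a| := by
  have hden : 0 < 1 - t * (1 - L) := by nlinarith
  have hsplit : |L * b + (1 - L) * a| = L * |b| + (1 - L) * |a| := by
    rcases lt_trichotomy a 0 with ha | rfl | ha
    · have hb : b < 0 := by nlinarith
      rw [abs_of_neg ha, abs_of_neg hb, abs_of_nonpos (by nlinarith)]
      ring
    · simp [abs_mul, abs_of_nonneg hL0]
    · have hb : 0 < b := by nlinarith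
      rw [abs_of_pos ha, abs_of_pos hb, abs_of_nonneg (by nlinarith)]
  rw [div_mul_eq_mul_div, le_div_iff₀ hden] at hlip
  rw [hsplit]
  nlinarith

theorem statement15_general (s : ℝ → EReal) (hproper : ERealProper s)
    (hconv : ERealConvexOn s)
    (γ κ : ℝ) (hγ : 0 < γ) (hκ : 0 < κ) (hγκ : γ * κ ^ 2 < 1)
    (t : ℝ) (ht0 : 0 ≤ t) (ht1 : t < 1)
    (p q : ℝ → ℝ)
    (hp : ∀ x, IsProxPtEReal s x (p x))
    (hq : ∀ x, IsProxPtEReal (fun u => (γ : EReal) * s (κ * u)) x (q x))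
    (hlip : ∀ x y : ℝ, |p x - p y| ≤ γ * κ ^ 2 * t / (1 - t * (1 - γ * κ ^ 2)) * |x - y|) :
    ∀ x y : ℝ, |q x - q y| ≤ t * |x - y| := by
  obtain ⟨u, hu⟩ : ∃ u : ℝ → ℝ, ∀ x, u x = κ * q x + (κ * x - κ * q x) / (γ * κ ^ 2) :=
    ⟨_, fun _ => rfl⟩
  have hfix : ∀ x, κ * q x = p (u x) := fun x =>
    (hq x).mul_eq_of_const_mul_comp_mul hproper hconv hγ hκ (hu x ▸ hp (u x))
  intro x y
  have key := abs_le_mul_abs_of_sq_le_mul (a := κ * q x - κ * q y) (b := u x - u y)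
    (by positivity) hγκ.le ht0 ht1
    (by rw [hfix x, hfix y]; exact (hp _).sq_sub_le_mul_sub hproper hconv (hp _))
    (by rw [hfix x, hfix y]; exact hlip _ _)
  rw [show γ * κ ^ 2 * (u x - u y) + (1 - γ * κ ^ 2) * (κ * q x - κ * q y) = κ * (x - y) by
    rw [hu, hu]; field_simp; ring, ← mul_sub, abs_mul, abs_mul, abs_of_pos hκ, mul_left_comm] at key
  exact le_of_mul_le_mul_left key hκ

/-- If `prox_s` is Lipschitz with constant `γκ²t/(1 − t(1 − γκ²))`, then
`prox_{γ·s(κ·)}` is Lipschitz with constant `t`. -/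
theorem statement15 (s : ℝ → EReal) (hproper : ERealProper s)
    (hconv : ERealConvexOn s) (hlsc : LowerSemicontinuous s)
    (γ κ : ℝ) (hγ : 0 < γ) (hκ : 0 < κ) (hγκ : γ * κ ^ 2 < 1)
    (t : ℝ) (ht0 : 0 ≤ t) (ht1 : t < 1)
    (p q : ℝ → ℝ)
    (hp : ∀ x, IsProxPtEReal s x (p x))
    (hq : ∀ x, IsProxPtEReal (fun u => (γ : EReal) * s (κ * u)) x (q x))
    (hlip : ∀ x y : ℝ, |p x - p y| ≤ γ * κ ^ 2 * t / (1 - t * (1 - γ * κ ^ 2)) * |x - y|) :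
    ∀ x y : ℝ, |q x - q y| ≤ t * |x - y| :=
  statement15_general s hproper hconv γ κ hγ hκ hγκ t ht0 ht1 p q hp hq hlip
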